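/- Let w and w' be words over {2,3} of the same length n with the same number of 2's and 3's, ordered lexicographically with 2 < 3. If w is strictly smaller than w' in lexicographic order, then the coefficient of δ_{cat₀(w')} in K_{1,0}(w) is zero. Moreover, for every word w over {2,3}, the coefficient of δ_{cat₀(w)} in K_{1,0}(w) equals 1; equivalently, the identity partition is the unique good-shuffle realizing cat₀(w) from its own blocks. Hence the matrix (M_{w,w'}) of these coefficients, over all words with fixed numbers of 2's and 3's, is triangular with 1's on the diagonal. -/

import Mathlib

/-- Words over the alphabet `{0,1}`, encoded with `false` = `0` and `true` = `1`. -/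
abbrev Word : Type := List Bool

/-- The ℚ-vector space `A` of finitely supported functions on words over `{0,1}`. -/
abbrev A01 : Type := Word →₀ ℚ

/-- The basis element `δ_x` of `A` attached to a word `x`. -/
noncomputable def δ (x : Word) : A01 := Finsupp.single x 1

/-- Prepend the letter `a` to every word of a formal sum. -/
noncomputable def prependLetter (a : Bool) (f : A01) : A01 :=
  Finsupp.mapDomain (List.cons a) f

/-- The shuffle product of two words, as an element of `A`. -/
noncomputable def shuffle : Word → Word → A01
  | [], y => δ y
  | a :: x, [] => δ (a :: x)
  | a :: x, b :: y =>
      prependLetter a (shuffle x (b :: y)) + prependLetter b (shuffle (a :: x) y)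
  termination_by x y => x.length + y.length

/-- The half-shuffle product on basis words: `δ_{a::x} ≺ δ_y = a·(x ш y)`, `δ_[] ≺ δ_y = 0`. -/
noncomputable def halfWord : Word → Word → A01
  | [], _ => 0
  | a :: x, y => prependLetter a (shuffle x y)

/-- The half-shuffle (zinbiel) product `≺` on `A`, extended bilinearly from basis words. -/
noncomputable def half (f g : A01) : A01 :=
  f.sum fun x c => g.sum fun y d => (c * d) • halfWord x y

/-- The right-parenthesized product `K(a_1, …, a_n) = a_1 ≺ (a_2 ≺ (⋯ ≺ a_n))`,
with `K(a_n) = a_n`, and `δ_[]` (the shuffle unit) for the empty list. -/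
noncomputable def Klist : List A01 → A01
  | [] => δ []
  | [a] => a
  | a :: b :: l => half a (Klist (b :: l))

/-- The generators `z_2 = δ_{(1,0)}` and `z_3 = u·δ_{(1,0,0)} + v·δ_{(1,1,0)}`;
letters of the alphabet `{2,3}` are encoded with `false` = `2` and `true` = `3`. -/
noncomputable def zgen (u v : ℚ) : Bool → A01
  | false => δ [true, false]
  | true => u • δ [true, false, false] + v • δ [true, true, false]

/-- `K_{u,v}(w)` for a word `w` over `{2,3}` (encoded with `false` = `2`, `true` = `3`). -/
noncomputable def Kuv (u v : ℚ) (w : List Bool) : A01 :=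
  Klist (w.map (zgen u v))

/-- The block substitution `2 ↦ (1,0)`, `3 ↦ (1,0,0)`. -/
def blocks0 (c : Bool) : Word := if c then [true, false, false] else [true, false]

/-- The block substitution `2 ↦ (1,0)`, `3 ↦ (1,1,0)`. -/
def blocks1 (c : Bool) : Word := if c then [true, true, false] else [true, false]

/-- `cat₀(w)`: substitute `2 ↦ (1,0)`, `3 ↦ (1,0,0)` and concatenate. -/
def cat0 (w : List Bool) : Word := (w.map blocks0).flatten

/-- `cat₁(w)`: substitute `2 ↦ (1,0)`, `3 ↦ (1,1,0)` and concatenate. -/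
def cat1 (w : List Bool) : Word := (w.map blocks1).flatten

/-- A good-shuffle realizing the word `x` from the words `ws = (w^1, …, w^n)`:
a partition `S` of the positions of `x`, reading `x` along `S j` gives `w^j`,
and the minima of the parts are in increasing order. -/
def GoodShuffle (ws : List Word) (x : Word)
    (S : Fin ws.length → Finset (Fin x.length)) : Prop :=
  (∀ p : Fin x.length, ∃! j, p ∈ S j) ∧
  (∀ j, ((S j).sort (· ≤ ·)).map x.get = ws.get j) ∧
  (∀ j k, j < k → (S j).min < (S k).min)

/-- The weight of a word over `{2,3}`: the sum of its letters. -/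
def wt (w : List Bool) : ℕ := (w.map fun c => if c then 3 else 2).sum

/-!
Since `z_c = δ_{1 0^k}` with `k = 1` for `c = 2` and `k = 2` for `c = 3`, we have
`K_{1,0}(c w) = 1 · (0^k ш K_{1,0}(w))`, and every word in the support of `K_{1,0}(w)` is empty
or begins with `1`. In a shuffle `0^k ш y` with such a `y`, the word `0^k z` arises only from
`y = z`, so the coefficient of `1 0^k z` in `K_{1,0}(c w)` is that of `z` in `K_{1,0}(w)`.
Peeling off the common prefix of `w` and `w'` block by block thus reduces the diagonal to
`K_{1,0}([]) = δ_[]` and the off-diagonal to the first position where `w` has a `2` and `w'` a `3`: there the single `0`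
of `z_2` would have to produce the two leading zeros of `1 0 0 …`, which is impossible.
-/

lemma prependLetter_apply_cons_self (a : Bool) (f : A01) (t : Word) :
    prependLetter a f (a :: t) = f t :=
  Finsupp.mapDomain_apply List.cons_injective f t

lemma prependLetter_apply_of_head?_ne (a : Bool) (f : A01) {t : Word} (ht : t.head? ≠ some a) :
    prependLetter a f t = 0 :=
  Finsupp.mapDomain_of_notMem_range f t (by rintro ⟨x, rfl⟩; simp at ht)

lemma shuffle_nil_left (y : Word) : shuffle [] y = δ y := by rw [shuffle]

lemma shuffle_nil_right (x : Word) : shuffle x [] = δ x := by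
  cases x <;> rw [shuffle]

lemma shuffle_cons_cons (a : Bool) (x : Word) (b : Bool) (y : Word) :
    shuffle (a :: x) (b :: y) =
      prependLetter a (shuffle x (b :: y)) + prependLetter b (shuffle (a :: x) y) := by
  rw [shuffle]

lemma shuffle_replicate_apply_replicate_append {a : Bool} (k : ℕ) {y : Word}
    (hy : y.head? ≠ some a) (z : Word) :
    shuffle (List.replicate k a) y (List.replicate k a ++ z) = δ y z := by
  cases y with
  | nil =>
    rw [shuffle_nil_right]
    simp [δ, Finsupp.single_apply, eq_comm]
  | cons b y =>
    induction k with
    | zero => rw [List.replicate_zero, List.nil_append, shuffle_nil_left]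
    | succ k ih =>
      rw [List.replicate_succ, shuffle_cons_cons, List.cons_append, Finsupp.add_apply,
        prependLetter_apply_cons_self, prependLetter_apply_of_head?_ne b _ (by simpa using hy.symm),
        ih, add_zero]

lemma shuffle_singleton_apply_cons_cons {a : Bool} {y : Word} (hy : y.head? ≠ some a)
    (t : Word) : shuffle [a] y (a :: a :: t) = 0 := by
  have h := shuffle_replicate_apply_replicate_append 1 hy (a :: t)
  rw [List.replicate_one, List.singleton_append] at h
  rw [h, δ, Finsupp.single_apply, if_neg]
  rintro rfl
  simp at hy

lemma half_δ_cons (a : Bool) (x : Word) (g : A01) :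
    half (δ (a :: x)) g = g.sum fun y d => d • prependLetter a (shuffle x y) := by
  rw [half, δ, Finsupp.sum_single_index (by simp)]
  simp only [one_mul, halfWord]

lemma half_δ_δ_nil {x : Word} (hx : x ≠ []) : half (δ x) (δ []) = δ x := by
  obtain ⟨a, x, rfl⟩ := List.exists_cons_of_ne_nil hx
  rw [half_δ_cons, δ, Finsupp.sum_single_index (by simp), one_smul, shuffle_nil_right, δ,
    prependLetter, Finsupp.mapDomain_single, δ]

lemma Klist_δ_cons {x : Word} (hx : x ≠ []) (l : List A01) :
    Klist (δ x :: l) = half (δ x) (Klist l) := by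
  cases l with
  | nil => rw [Klist, Klist, half_δ_δ_nil hx]
  | cons b l => rw [Klist]

lemma half_δ_cons_apply_cons_self (a : Bool) (x : Word) (g : A01) (t : Word) :
    half (δ (a :: x)) g (a :: t) = g.sum fun y d => d * shuffle x y t := by
  rw [half_δ_cons, Finsupp.sum_apply]
  simp only [Finsupp.smul_apply, prependLetter_apply_cons_self, smul_eq_mul]

lemma half_δ_cons_apply_of_head?_ne (a : Bool) (x : Word) (g : A01) {t : Word}
    (ht : t.head? ≠ some a) : half (δ (a :: x)) g t = 0 := by
  rw [half_δ_cons, Finsupp.sum_apply]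
  exact Finset.sum_eq_zero fun y _ => by
    simp only [Finsupp.smul_apply, prependLetter_apply_of_head?_ne a _ ht, smul_zero]

def blockZeros (c : Bool) : Word := List.replicate (cond c 2 1) false

lemma blocks0_eq_cons_blockZeros (c : Bool) : blocks0 c = true :: blockZeros c := by
  cases c <;> rfl

lemma cat0_cons (c : Bool) (w : List Bool) :
    cat0 (c :: w) = true :: (blockZeros c ++ cat0 w) := by
  simp [cat0, blocks0_eq_cons_blockZeros c]

lemma zgen_one_zero (c : Bool) : zgen 1 0 c = δ (blocks0 c) := by
  cases c <;> simp [zgen, blocks0]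

lemma Kuv_one_zero_cons (c : Bool) (w : List Bool) :
    Kuv 1 0 (c :: w) = half (δ (blocks0 c)) (Kuv 1 0 w) := by
  rw [Kuv, List.map_cons, zgen_one_zero,
    Klist_δ_cons (by rw [blocks0_eq_cons_blockZeros]; exact List.cons_ne_nil _ _), Kuv]

lemma head?_ne_some_false_of_mem_support_Kuv_one_zero {w : List Bool} {y : Word}
    (hy : y ∈ (Kuv 1 0 w).support) : y.head? ≠ some false := by
  intro hfalse
  refine Finsupp.mem_support_iff.mp hy ?_
  cases w with
  | nil =>
    rw [Kuv, List.map_nil, Klist, δ, Finsupp.single_apply, if_neg]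
    rintro rfl
    simp at hfalse
  | cons c w =>
    rw [Kuv_one_zero_cons, blocks0_eq_cons_blockZeros]
    exact half_δ_cons_apply_of_head?_ne _ _ _ (by simp [hfalse])

lemma Kuv_one_zero_cons_apply_blockZeros_append (c : Bool) (w : List Bool) (z : Word) :
    Kuv 1 0 (c :: w) (true :: (blockZeros c ++ z)) = Kuv 1 0 w z := by
  rw [Kuv_one_zero_cons, blocks0_eq_cons_blockZeros, half_δ_cons_apply_cons_self,
    ← Finsupp.sum_ite_self_eq' (Kuv 1 0 w) z]
  refine Finsupp.sum_congr fun y hy => ?_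
  rw [blockZeros, shuffle_replicate_apply_replicate_append _
      (head?_ne_some_false_of_mem_support_Kuv_one_zero hy),
    δ, Finsupp.single_apply, mul_ite, mul_one, mul_zero]

lemma Kuv_one_zero_apply_cat0_self (w : List Bool) : Kuv 1 0 w (cat0 w) = 1 := by
  induction w with
  | nil => simp [Kuv, Klist, δ, cat0]
  | cons c w ih => rw [cat0_cons, Kuv_one_zero_cons_apply_blockZeros_append, ih]

lemma Kuv_one_zero_apply_cat0_of_lex {w w' : List Bool} (h : List.Lex (· < ·) w w') :
    Kuv 1 0 w (cat0 w') = 0 := by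
  induction h with
  | nil => simp [cat0_cons, Kuv, Klist, δ]
  | @rel a w b w' hab =>
    obtain ⟨rfl, rfl⟩ := Bool.lt_iff.mp hab
    rw [cat0_cons, Kuv_one_zero_cons, blocks0_eq_cons_blockZeros, half_δ_cons_apply_cons_self,
      show blockZeros false = [false] from rfl,
      show blockZeros true ++ cat0 w' = false :: false :: cat0 w' from rfl]
    refine Finset.sum_eq_zero fun y hy => ?_
    beta_reduce
    rw [shuffle_singleton_apply_cons_cons (head?_ne_some_false_of_mem_support_Kuv_one_zero hy),
      mul_zero]
  | cons _ ih => rw [cat0_cons, Kuv_one_zero_cons_apply_blockZeros_append, ih]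

/-- Triangularity for `(u,v) = (1,0)`: for words over `{2,3}` (encoded `false` = `2` <
`true` = `3`) with the same length and the same numbers of `2`'s and `3`'s, if `w` is
lexicographically smaller than `w'` then the coefficient of `δ_{cat₀(w')}` in `K_{1,0}(w)`
vanishes, while the diagonal coefficient of `δ_{cat₀(w)}` in `K_{1,0}(w)` equals `1`. -/
theorem K10_matrix_triangular :
    (∀ w w' : List Bool, w.length = w'.length → w.count false = w'.count false →
      w.count true = w'.count true → List.Lex (· < ·) w w' →
      (Kuv 1 0 w) (cat0 w') = 0) ∧
    (∀ w : List Bool, (Kuv 1 0 w) (cat0 w) = 1) :=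
  ⟨fun _ _ _ _ _ h => Kuv_one_zero_apply_cat0_of_lex h, Kuv_one_zero_apply_cat0_self⟩
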